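/- arXiv:1101.1260 — 4 statements merged into one kernel-verified Lean document; each statement's English description precedes it below -/
import Mathlib

section
/- Consider the recurrence a₀ = 1, a_{j+1}(h) = A₊/((j+1)(2ω₊ + ihA₊(j+1))) · Σ_{0≤l≤j} ψ_l(h)(1+2j−l) a_{j−l}(h), where A₊ > 0, |2ω₊ + ihA₊(j+1)| ≥ ε > 0 for all j ≥ 0 and all small h > 0, and the coefficients satisfy |ψ_l(h)| ≤ C₀ S^l for constants C₀, S. Then there exists R > 0 (one may take any R ≥ 2C₀A₊/ε + S) such that |a_j(h)| ≤ R^j for all j and all small h; consequently the power series Σ a_j(h) w^j converges for |w| < R^{−1} uniformly in h. -/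
open Set Finset

theorem stmt3 (A ε C₀ S h₀ : ℝ) (hA : 0 < A) (hε : 0 < ε) (hC₀ : 0 ≤ C₀) (hS : 0 ≤ S)
    (hh₀ : 0 < h₀) (ω : ℂ) (ψ : ℕ → ℝ → ℂ) (a : ℕ → ℝ → ℂ)
    (ha0 : ∀ h, a 0 h = 1)
    (hrec : ∀ j : ℕ, ∀ h ∈ Ioc (0:ℝ) h₀, a (j+1) h =
      ((A:ℂ) / (((j:ℂ)+1) * (2*ω + Complex.I * (h:ℂ) * (A:ℂ) * ((j:ℂ)+1)))) *
        ∑ l ∈ Finset.range (j+1), ψ l h * ((1 + 2*j - l : ℕ) : ℂ) * a (j - l) h)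
    (hlow : ∀ j : ℕ, ∀ h ∈ Ioc (0:ℝ) h₀, ε ≤ ‖2*ω + Complex.I * (h:ℂ) * (A:ℂ) * ((j:ℂ)+1)‖)
    (hψ : ∀ l : ℕ, ∀ h ∈ Ioc (0:ℝ) h₀, ‖ψ l h‖ ≤ C₀ * S ^ l) :
    ∀ R : ℝ, 0 < R → 2*C₀*A/ε + S ≤ R →
      (∀ j : ℕ, ∀ h ∈ Ioc (0:ℝ) h₀, ‖a j h‖ ≤ R ^ j) ∧
      (∀ h ∈ Ioc (0:ℝ) h₀, ∀ w : ℂ, ‖w‖ < R⁻¹ → Summable (fun j : ℕ => a j h * w ^ j)) := by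
  intro R hR hRge
  have hCS : 2*C₀*A/ε ≤ R - S := by linarith
  have hkey : ∀ j : ℕ, ∀ h ∈ Ioc (0:ℝ) h₀, ‖a j h‖ ≤ R ^ j := by
    intro j
    induction j using Nat.strong_induction_on with
    | _ j ih =>
    match j with
    | 0 => intro h hh; simp [ha0 h]
    | (j+1) =>
      intro h hh
      rw [hrec j h hh, norm_mul]
      have hj1 : (0:ℝ) < (j:ℝ) + 1 := by positivity
      -- bound on the prefactor
      have hfac : ‖(A:ℂ) / (((j:ℂ)+1) * (2*ω + Complex.I * (h:ℂ) * (A:ℂ) * ((j:ℂ)+1)))‖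
          ≤ A / (((j:ℝ)+1) * ε) := by
        rw [norm_div, norm_mul]
        have h1 : ‖((j:ℂ)+1)‖ = (j:ℝ)+1 := by
          have e : ((j:ℂ)+1) = ((j+1:ℕ):ℂ) := by push_cast; ring
          rw [e, Complex.norm_natCast]; push_cast; ring
        have h2 : ‖(A:ℂ)‖ = A := by
          rw [Complex.norm_real, Real.norm_eq_abs, abs_of_pos hA]
        rw [h1, h2]
        have hD := hlow j h hh
        gcongr
      -- bound on the sum
      have hsum : ‖∑ l ∈ Finset.range (j+1), ψ l h * ((1 + 2*j - l : ℕ) : ℂ) * a (j - l) h‖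
          ≤ ∑ l ∈ Finset.range (j+1), C₀ * S ^ l * (2*((j:ℝ)+1)) * R ^ (j - l) := by
        refine (norm_sum_le _ _).trans (Finset.sum_le_sum fun l hl => ?_)
        rw [Finset.mem_range, Nat.lt_succ_iff] at hl
        rw [norm_mul, norm_mul]
        have hn : ‖((1 + 2*j - l : ℕ) : ℂ)‖ ≤ 2*((j:ℝ)+1) := by
          rw [Complex.norm_natCast]
          have : (1 + 2*j - l : ℕ) ≤ 2*(j+1) := by omega
          calc ((1 + 2*j - l : ℕ) : ℝ) ≤ ((2*(j+1) : ℕ) : ℝ) := by exact_mod_cast this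
            _ = 2*((j:ℝ)+1) := by push_cast; ring
        have hih := ih (j - l) (by omega) h hh
        have hψl := hψ l h hh
        exact mul_le_mul (mul_le_mul hψl hn (norm_nonneg _) (by positivity))
          hih (norm_nonneg _) (by positivity)
      -- combine
      have step1 : ‖(A:ℂ) / (((j:ℂ)+1) * (2*ω + Complex.I * (h:ℂ) * (A:ℂ) * ((j:ℂ)+1)))‖ *
          ‖∑ l ∈ Finset.range (j+1), ψ l h * ((1 + 2*j - l : ℕ) : ℂ) * a (j - l) h‖
          ≤ (A / (((j:ℝ)+1) * ε)) * ∑ l ∈ Finset.range (j+1), C₀ * S ^ l * (2*((j:ℝ)+1)) * R ^ (j - l) := by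
        apply mul_le_mul hfac hsum (norm_nonneg _)
        positivity
      refine step1.trans ?_
      have heq : (A / (((j:ℝ)+1) * ε)) * ∑ l ∈ Finset.range (j+1), C₀ * S ^ l * (2*((j:ℝ)+1)) * R ^ (j - l)
          = (2*C₀*A/ε) * ∑ l ∈ Finset.range (j+1), S ^ l * R ^ (j - l) := by
        rw [Finset.mul_sum, Finset.mul_sum]
        apply Finset.sum_congr rfl
        intro l _
        field_simp
      rw [heq]
      have hsumnn : (0:ℝ) ≤ ∑ l ∈ Finset.range (j+1), S ^ l * R ^ (j - l) := by
        apply Finset.sum_nonneg; intro l _; positivity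
      have htel : (R - S) * ∑ l ∈ Finset.range (j+1), S ^ l * R ^ (j - l)
          = R ^ (j+1) - S ^ (j+1) := by
        rw [Finset.mul_sum]
        have : ∀ l ∈ Finset.range (j+1), (R - S) * (S ^ l * R ^ (j - l))
            = (fun l => S ^ l * R ^ (j + 1 - l)) l - (fun l => S ^ l * R ^ (j + 1 - l)) (l+1) := by
          intro l hl
          rw [Finset.mem_range, Nat.lt_succ_iff] at hl
          simp only
          have e1 : j + 1 - l = (j - l) + 1 := by omega
          have e2 : j + 1 - (l + 1) = j - l := by omega
          rw [e1, e2, pow_succ, pow_succ]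
          ring
        rw [Finset.sum_congr rfl this, Finset.sum_range_sub']
        simp
      calc (2*C₀*A/ε) * ∑ l ∈ Finset.range (j+1), S ^ l * R ^ (j - l)
          ≤ (R - S) * ∑ l ∈ Finset.range (j+1), S ^ l * R ^ (j - l) := by
            apply mul_le_mul_of_nonneg_right hCS hsumnn
        _ = R ^ (j+1) - S ^ (j+1) := htel
        _ ≤ R ^ (j+1) := by nlinarith [pow_nonneg hS (j+1)]
  refine ⟨hkey, fun h hh w hw => ?_⟩
  have hRw : R * ‖w‖ < 1 := by
    have := mul_lt_mul_of_pos_left hw hR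
    rwa [mul_inv_cancel₀ (ne_of_gt hR)] at this
  apply Summable.of_norm_bounded (g := fun j => (R * ‖w‖) ^ j)
  · exact summable_geometric_of_lt_one (by positivity) hRw
  · intro j
    rw [norm_mul, norm_pow, mul_pow]
    exact mul_le_mul_of_nonneg_right (hkey j h hh) (by positivity)
end

section
/- Let β ∈ ℂ with Re(−iβ/h) ≥ 1, let I = [−c,c] ⊂ ℝ, and let u ∈ C¹(I). Define Q(β)u = h x u′(x)/i − β u (i.e. Q(β) = hxD_x − β with D_x = −i d/dx). Then the function x ↦ x^{−iβ/h}u(x) on (0,c] extends continuously by 0 at x = 0, and one has the bound sup_{x∈(0,c]} |x^{−iβ/h} u(x)| ≤ h^{−1} c^{Re(−iβ/h)−1/2} ‖Q(β)u‖_{L²(0,c)} · (2Re(−iβ/h) − 1)^{−1/2}. In particular, ‖x^{−iβ/h}u‖_{L^∞(0,c)} ≤ C(h,β,c) ‖Q(β)u‖_{L²(0,c)} with an explicit constant. -/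
open Set MeasureTheory Filter

set_option maxHeartbeats 1000000

theorem stmt8 (c h : ℝ) (hc : 0 < c) (hh : 0 < h) (β : ℂ)
    (hβ : 1 ≤ (-Complex.I * β / (h:ℂ)).re)
    (u u' : ℝ → ℂ)
    (hu : ContinuousOn u (Icc (-c) c))
    (hu' : ContinuousOn u' (Icc (-c) c))
    (hderiv : ∀ x ∈ Ioo (-c) c, HasDerivAt u (u' x) x) :
    Filter.Tendsto (fun x : ℝ => (x:ℂ) ^ (-Complex.I * β / (h:ℂ)) * u x)
      (nhdsWithin 0 (Ioi 0)) (nhds 0) ∧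
    ∀ x ∈ Ioc (0:ℝ) c,
      ‖(x:ℂ) ^ (-Complex.I * β / (h:ℂ)) * u x‖ ≤
        h⁻¹ * c ^ ((-Complex.I * β / (h:ℂ)).re - 1/2) *
          (2 * (-Complex.I * β / (h:ℂ)).re - 1) ^ (-(1:ℝ)/2) *
          Real.sqrt (∫ t in Ioo (0:ℝ) c,
            ‖(h:ℂ) * (t:ℂ) * u' t / Complex.I - β * u t‖^2) := by
  set a : ℂ := -Complex.I * β / (h:ℂ) with ha
  set r : ℝ := a.re with hr
  set Q : ℝ → ℂ := fun t => (h:ℂ) * (t:ℂ) * u' t / Complex.I - β * u t with hQ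
  set f : ℝ → ℂ := fun x => (x:ℂ) ^ a * u x with hf
  have hrpos : (0:ℝ) < r := lt_of_lt_of_le one_pos hβ
  have hne : (h:ℂ) ≠ 0 := by exact_mod_cast hh.ne'
  have h2r : (0:ℝ) < 2 * r - 1 := by linarith
  -- Part 1 : tendsto
  have hu0 : Tendsto u (nhdsWithin 0 (Ioi 0)) (nhds (u 0)) := by
    have h0m : (0:ℝ) ∈ Icc (-c) c := ⟨by linarith, hc.le⟩
    refine (hu 0 h0m).tendsto.mono_left ?_
    refine nhdsWithin_le_iff.2 (mem_nhdsWithin_of_mem_nhds ?_)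
    exact Icc_mem_nhds (by linarith) hc
  have hcp : Tendsto (fun x : ℝ => (x:ℂ) ^ a) (nhdsWithin 0 (Ioi 0)) (nhds 0) := by
    rw [tendsto_zero_iff_norm_tendsto_zero]
    have hlim : Tendsto (fun x : ℝ => x ^ r) (nhdsWithin 0 (Ioi 0)) (nhds 0) := by
      have := (Real.continuousAt_rpow_const 0 r (Or.inr hrpos.le)).tendsto
      rw [Real.zero_rpow hrpos.ne'] at this
      exact this.mono_left nhdsWithin_le_nhds
    refine hlim.congr' ?_
    filter_upwards [self_mem_nhdsWithin] with x (hx : (0:ℝ) < x)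
    rw [Complex.norm_cpow_eq_rpow_re_of_pos hx]
  have part1 : Tendsto f (nhdsWithin 0 (Ioi 0)) (nhds 0) := by
    have := hcp.mul hu0
    rwa [zero_mul] at this
  refine ⟨part1, ?_⟩
  -- continuity of Q
  have hQc : ContinuousOn Q (Icc (-c) c) := by
    apply ContinuousOn.sub
    · exact (((continuousOn_const).mul Complex.continuous_ofReal.continuousOn).mul hu').div_const _
    · exact continuousOn_const.mul hu
  -- derivative identity
  have hg : ∀ t ∈ Ioo (0:ℝ) c, HasDerivAt f (Complex.I / (h:ℂ) * (t:ℂ) ^ (a - 1) * Q t) t := by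
    intro t ht
    have ht0 : (0:ℝ) < t := ht.1
    have htc : (t:ℂ) ≠ 0 := by exact_mod_cast ht0.ne'
    have h1 : HasDerivAt (fun s : ℝ => (s:ℂ) ^ a) (a * (t:ℂ) ^ (a - 1)) t :=
      (Complex.hasStrictDerivAt_cpow_const
        (Complex.ofReal_mem_slitPlane.mpr ht0)).hasDerivAt.comp_ofReal
    have h2 := h1.mul (hderiv t ⟨by linarith [ht.1], ht.2⟩)
    convert h2 using 1
    · rfl
    · rfl
    have hpow : (t:ℂ) ^ a = (t:ℂ) ^ (a - 1) * t := by
      rw [Complex.cpow_sub _ _ htc, Complex.cpow_one, div_mul_cancel₀ _ htc]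
    rw [hQ, hpow, ha]
    field_simp
    ring_nf
  -- main bound
  intro x hx
  set B : ℝ := h⁻¹ * c ^ (r - 1/2) * (2 * r - 1) ^ (-(1:ℝ)/2) *
      Real.sqrt (∫ t in Ioo (0:ℝ) c, ‖Q t‖ ^ 2) with hB
  have hQint : IntegrableOn (fun t => ‖Q t‖ ^ 2) (Ioc 0 c) := by
    have : ContinuousOn (fun t => ‖Q t‖ ^ 2) (Icc (0:ℝ) c) :=
      ((hQc.mono (Icc_subset_Icc (by linarith) le_rfl)).norm.pow 2)
    exact (this.integrableOn_compact isCompact_Icc).mono_set Ioc_subset_Icc_self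
  have hsqnn : (0:ℝ) ≤ ∫ t in Ioo (0:ℝ) c, ‖Q t‖ ^ 2 :=
    setIntegral_nonneg measurableSet_Ioo (fun t _ => by positivity)
  have key : ∀ ε ∈ Ioo (0:ℝ) x, ‖f x - f ε‖ ≤ B := by
    intro ε hε
    have hε0 : (0:ℝ) < ε := hε.1
    have hεx : ε ≤ x := hε.2.le
    have hxc : x ≤ c := hx.2
    have hsub : Icc ε x ⊆ Icc (-c) c := Icc_subset_Icc (by linarith) hxc
    have hcpc : ∀ b : ℂ, ContinuousOn (fun s : ℝ => (s:ℂ) ^ b) (Icc ε x) := by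
      intro b s hs
      have hs0 : (0:ℝ) < s := lt_of_lt_of_le hε0 hs.1
      exact ((Complex.hasStrictDerivAt_cpow_const
        (Complex.ofReal_mem_slitPlane.mpr hs0)).hasDerivAt.comp_ofReal).continuousAt.continuousWithinAt
    have hfc : ContinuousOn f (Icc ε x) := (hcpc a).mul (hu.mono hsub)
    set g : ℝ → ℂ := fun t => Complex.I / (h:ℂ) * (t:ℂ) ^ (a - 1) * Q t with hgdef
    have hgc : ContinuousOn g (Icc ε x) :=
      (continuousOn_const.mul (hcpc (a - 1))).mul (hQc.mono hsub)
    have hgint : IntervalIntegrable g volume ε x := hgc.intervalIntegrable_of_Icc hεx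
    have hFTC : ∫ t in ε..x, g t = f x - f ε := by
      apply intervalIntegral.integral_eq_sub_of_hasDeriv_right_of_le hεx hfc ?_ hgint
      intro t ht
      exact (hg t ⟨lt_trans hε0 ht.1, lt_of_lt_of_le ht.2 hxc⟩).hasDerivWithinAt
    have hnorm : ∀ t ∈ Ioc ε x, ‖g t‖ = h⁻¹ * (t ^ (r - 1) * ‖Q t‖) := by
      intro t ht
      have ht0 : (0:ℝ) < t := lt_trans hε0 ht.1
      rw [hgdef]
      simp only [norm_mul, norm_div, Real.norm_eq_abs, Complex.norm_I, Complex.norm_real,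
        Complex.norm_cpow_eq_rpow_re_of_pos ht0, abs_of_pos hh, Complex.sub_re, Complex.one_re]
      rw [← hr]
      ring
    -- Cauchy-Schwarz setup
    have hfin : IsFiniteMeasure ((volume : Measure ℝ).restrict (Ioc ε x)) :=
      ⟨by rw [Measure.restrict_apply_univ]; exact measure_Ioc_lt_top⟩
    have hp2 : Real.HolderConjugate 2 2 := Real.HolderConjugate.two_two
    have hrc : ContinuousOn (fun t : ℝ => t ^ (r - 1)) (Ioc ε x) := by
      intro s hs
      exact (Real.continuousAt_rpow_const s (r-1)
        (Or.inl (lt_trans hε0 hs.1).ne')).continuousWithinAt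
    have hm1 : MemLp (fun t : ℝ => t ^ (r - 1)) (ENNReal.ofReal 2)
        ((volume : Measure ℝ).restrict (Ioc ε x)) := by
      apply MemLp.of_bound (hrc.aestronglyMeasurable measurableSet_Ioc) (x ^ (r - 1))
      rw [ae_restrict_iff' measurableSet_Ioc]
      apply Filter.Eventually.of_forall
      intro t ht
      have ht0 : (0:ℝ) < t := lt_trans hε0 ht.1
      rw [Real.norm_eq_abs, abs_of_nonneg (Real.rpow_nonneg ht0.le _)]
      exact Real.rpow_le_rpow ht0.le ht.2 (by linarith)
    obtain ⟨M, hM⟩ := isCompact_Icc.exists_bound_of_continuousOn hQc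
    have hm2 : MemLp (fun t : ℝ => ‖Q t‖) (ENNReal.ofReal 2)
        ((volume : Measure ℝ).restrict (Ioc ε x)) := by
      apply MemLp.of_bound (((hQc.mono (Ioc_subset_Icc_self.trans hsub)).norm).aestronglyMeasurable measurableSet_Ioc) M
      rw [ae_restrict_iff' measurableSet_Ioc]
      apply Filter.Eventually.of_forall
      intro t ht
      rw [norm_norm]
      exact hM t (hsub ⟨ht.1.le, ht.2⟩)
    have hCS := MeasureTheory.integral_mul_le_Lp_mul_Lq_of_nonneg hp2
      (by rw [Filter.EventuallyLE, ae_restrict_iff' measurableSet_Ioc]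
          exact Filter.Eventually.of_forall fun t ht =>
            Real.rpow_nonneg (lt_trans hε0 ht.1).le _)
      (Filter.Eventually.of_forall fun t => norm_nonneg _) hm1 hm2
    -- factor A
    have hAnn : (0:ℝ) ≤ ∫ t in Ioc ε x, (t ^ (r - 1)) ^ (2:ℝ) :=
      setIntegral_nonneg measurableSet_Ioc fun t ht =>
        Real.rpow_nonneg (Real.rpow_nonneg (lt_trans hε0 ht.1).le _) _
    have hA : ∫ t in Ioc ε x, (t ^ (r - 1)) ^ (2:ℝ) ≤ c ^ (2*r - 1) / (2*r - 1) := by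
      have hcongr : ∫ t in Ioc ε x, (t ^ (r - 1)) ^ (2:ℝ)
          = ∫ t in Ioc ε x, t ^ (2*r - 2) := by
        apply setIntegral_congr_fun measurableSet_Ioc
        intro t ht
        have ht0 : (0:ℝ) < t := lt_trans hε0 ht.1
        show (t ^ (r - 1)) ^ (2:ℝ) = t ^ (2*r - 2)
        rw [← Real.rpow_mul ht0.le, show (r - 1) * 2 = 2*r - 2 by ring]
      rw [hcongr, ← intervalIntegral.integral_of_le hεx,
        integral_rpow (Or.inl (by linarith : (-1:ℝ) < 2*r - 2)),
        show 2*r - 2 + 1 = 2*r - 1 by ring]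
      have e1 : (0:ℝ) ≤ ε ^ (2*r - 1) := Real.rpow_nonneg hε0.le _
      have e2 : x ^ (2*r - 1) ≤ c ^ (2*r - 1) :=
        Real.rpow_le_rpow hx.1.le hxc (by linarith)
      exact div_le_div₀ (Real.rpow_nonneg hc.le _) (by linarith) h2r le_rfl
    have hA2 : (∫ t in Ioc ε x, (t ^ (r - 1)) ^ (2:ℝ)) ^ ((1:ℝ)/2)
        ≤ c ^ (r - 1/2) * (2*r - 1) ^ (-(1:ℝ)/2) := by
      calc (∫ t in Ioc ε x, (t ^ (r - 1)) ^ (2:ℝ)) ^ ((1:ℝ)/2)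
          ≤ (c ^ (2*r - 1) / (2*r - 1)) ^ ((1:ℝ)/2) :=
            Real.rpow_le_rpow hAnn hA (by norm_num)
        _ = c ^ (r - 1/2) * (2*r - 1) ^ (-(1:ℝ)/2) := by
            rw [Real.div_rpow (Real.rpow_nonneg hc.le _) h2r.le, ← Real.rpow_mul hc.le,
              show (2*r - 1) * ((1:ℝ)/2) = r - 1/2 by ring, div_eq_mul_inv,
              ← Real.rpow_neg h2r.le, show -((1:ℝ)/2) = -(1:ℝ)/2 by ring]
    -- factor B
    have hBnn : (0:ℝ) ≤ ∫ t in Ioc ε x, ‖Q t‖ ^ (2:ℝ) :=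
      setIntegral_nonneg measurableSet_Ioc fun t ht => Real.rpow_nonneg (norm_nonneg _) _
    have hB1 : ∫ t in Ioc ε x, ‖Q t‖ ^ (2:ℝ) ≤ ∫ t in Ioo (0:ℝ) c, ‖Q t‖ ^ 2 := by
      have hcongr : ∫ t in Ioc ε x, ‖Q t‖ ^ (2:ℝ) = ∫ t in Ioc ε x, ‖Q t‖ ^ 2 := by
        apply setIntegral_congr_fun measurableSet_Ioc
        intro t _
        show ‖Q t‖ ^ (2:ℝ) = ‖Q t‖ ^ (2:ℕ)
        rw [show ((2:ℝ)) = ((2:ℕ):ℝ) by norm_num, Real.rpow_natCast]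
      rw [hcongr, ← MeasureTheory.integral_Ioc_eq_integral_Ioo]
      apply setIntegral_mono_set hQint
        (Filter.Eventually.of_forall fun t => by positivity)
        (HasSubset.Subset.eventuallyLE (Ioc_subset_Ioc hε0.le hxc))
    have hB2 : (∫ t in Ioc ε x, ‖Q t‖ ^ (2:ℝ)) ^ ((1:ℝ)/2)
        ≤ Real.sqrt (∫ t in Ioo (0:ℝ) c, ‖Q t‖ ^ 2) := by
      rw [Real.sqrt_eq_rpow]
      exact Real.rpow_le_rpow hBnn hB1 (by norm_num)
    -- assemble
    calc ‖f x - f ε‖ = ‖∫ t in ε..x, g t‖ := by rw [hFTC]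
      _ ≤ ∫ t in ε..x, ‖g t‖ := intervalIntegral.norm_integral_le_integral_norm hεx
      _ = ∫ t in Ioc ε x, ‖g t‖ := intervalIntegral.integral_of_le hεx
      _ = ∫ t in Ioc ε x, h⁻¹ * (t ^ (r - 1) * ‖Q t‖) :=
          setIntegral_congr_fun measurableSet_Ioc hnorm
      _ = h⁻¹ * ∫ t in Ioc ε x, t ^ (r - 1) * ‖Q t‖ := by
          rw [MeasureTheory.integral_const_mul]
      _ ≤ h⁻¹ * ((∫ t in Ioc ε x, (t ^ (r - 1)) ^ (2:ℝ)) ^ ((1:ℝ)/2)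
            * (∫ t in Ioc ε x, ‖Q t‖ ^ (2:ℝ)) ^ ((1:ℝ)/2)) := by
          apply mul_le_mul_of_nonneg_left hCS (inv_nonneg.mpr hh.le)
      _ ≤ h⁻¹ * ((c ^ (r - 1/2) * (2*r - 1) ^ (-(1:ℝ)/2))
            * Real.sqrt (∫ t in Ioo (0:ℝ) c, ‖Q t‖ ^ 2)) := by
          apply mul_le_mul_of_nonneg_left ?_ (inv_nonneg.mpr hh.le)
          apply mul_le_mul hA2 hB2 (Real.rpow_nonneg hBnn _) (by positivity)
      _ = B := by rw [hB]; ring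
  -- limiting argument
  have hev : ∀ᶠ ε in nhdsWithin (0:ℝ) (Ioi 0), ‖f x‖ ≤ ‖f ε‖ + B := by
    filter_upwards [Ioo_mem_nhdsGT_of_mem ⟨le_refl (0:ℝ), hx.1⟩] with ε hε
    calc ‖f x‖ = ‖f ε + (f x - f ε)‖ := by ring_nf
      _ ≤ ‖f ε‖ + ‖f x - f ε‖ := norm_add_le _ _
      _ ≤ ‖f ε‖ + B := by linarith [key ε hε]
  have hlim : Tendsto (fun ε => ‖f ε‖ + B) (nhdsWithin (0:ℝ) (Ioi 0)) (nhds (0 + B)) := by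
    have h1 := part1.norm
    rw [norm_zero] at h1
    exact h1.add tendsto_const_nhds
  have hfin := ge_of_tendsto hlim hev
  rw [zero_add] at hfin
  exact hfin
end

section
/- Let β ∈ ℂ, m-th degree case: suppose u is a polynomial of degree at most M on an interval I = [−c,c] and min_{m ∈ ℕ, 0≤m≤M} |β + ihm| ≥ h/C_β. Then ‖u‖_{L²(I)} ≤ C h^{−N} ‖Q(β)u‖_{L²(I)} for constants C, N depending only on M, c, C_β, where Q(β) = hxD_x − β (D_x = −i∂_x). -/
open Set MeasureTheory
open scoped ENNReal

noncomputable def pfun (M : ℕ) (v : Fin (M+1) → ℂ) : ℝ → ℂ :=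
  fun x => ∑ i : Fin (M+1), v i * (x:ℂ) ^ (i : ℕ)

lemma pfun_cont (M : ℕ) (v : Fin (M+1) → ℂ) : Continuous (pfun M v) := by
  unfold pfun
  exact continuous_finset_sum _ fun i _ =>
    continuous_const.mul (Complex.continuous_ofReal.pow _)

lemma pfun_memLp (M : ℕ) (c : ℝ) (v : Fin (M+1) → ℂ) :
    MemLp (pfun M v) 2 (volume.restrict (Ioo (-c) c)) := by
  have hfin : IsFiniteMeasure (volume.restrict (Ioo (-c) c)) :=
    ⟨by rw [Measure.restrict_apply_univ]; exact measure_Ioo_lt_top⟩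
  refine (memLp_top_of_bound (pfun_cont M v).aestronglyMeasurable
      (∑ i : Fin (M+1), ‖v i‖ * (max 1 c) ^ (i:ℕ)) ?_).mono_exponent le_top
  filter_upwards [ae_restrict_mem measurableSet_Ioo] with x hx
  have hxc : |x| ≤ max 1 c := by
    rw [abs_le]
    constructor
    · exact le_trans (by simp [neg_le_neg (le_max_right 1 c)]) hx.1.le
    · exact hx.2.le.trans (le_max_right 1 c)
  calc ‖pfun M v x‖ ≤ ∑ i : Fin (M+1), ‖v i * (x:ℂ) ^ (i:ℕ)‖ := norm_sum_le _ _
    _ ≤ ∑ i : Fin (M+1), ‖v i‖ * (max 1 c) ^ (i:ℕ) := by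
        refine Finset.sum_le_sum fun i _ => ?_
        rw [norm_mul, norm_pow, Complex.norm_real, Real.norm_eq_abs]
        exact mul_le_mul_of_nonneg_left (pow_le_pow_left₀ (abs_nonneg x) hxc _)
          (norm_nonneg _)

lemma pfun_eq_zero (M : ℕ) (c : ℝ) (hc : 0 < c) (v : Fin (M+1) → ℂ)
    (hv : pfun M v =ᵐ[volume.restrict (Ioo (-c) c)] 0) : v = 0 := by
  by_contra hne
  set p : Polynomial ℂ := ∑ i : Fin (M+1), Polynomial.C (v i) * Polynomial.X ^ (i:ℕ) with hp
  have heval : ∀ x : ℝ, pfun M v x = p.eval (x:ℂ) := by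
    intro x
    simp [pfun, hp, Polynomial.eval_finset_sum]
  have hpne : p ≠ 0 := by
    obtain ⟨i, hi⟩ := Function.ne_iff.mp hne
    intro h0
    apply hi
    have hco : p.coeff (i:ℕ) = v i := by
      simp [hp, Polynomial.coeff_C_mul, Polynomial.coeff_X_pow, Polynomial.finset_sum_coeff,
        Fin.val_inj]
    rw [h0, Polynomial.coeff_zero] at hco
    simpa using hco.symm
  set R := Complex.ofReal ⁻¹' {z : ℂ | p.IsRoot z} with hRdef
  have hR : Set.Finite R :=
    Set.Finite.preimage Complex.ofReal_injective.injOn (Polynomial.finite_setOf_isRoot hpne)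
  have hsub : Ioo (-c) c \ R ⊆ {x : ℝ | pfun M v x ≠ 0} := by
    intro x hx
    simpa [heval x, hRdef, Polynomial.IsRoot] using hx.2
  have h0 : (volume.restrict (Ioo (-c) c)) {x : ℝ | pfun M v x ≠ 0} = 0 := by
    have := hv
    rw [Filter.EventuallyEq, ae_iff] at this
    simpa using this
  have h1 : (volume.restrict (Ioo (-c) c)) (Ioo (-c) c \ R) = 0 :=
    measure_mono_null hsub h0
  rw [Measure.restrict_apply (measurableSet_Ioo.diff hR.measurableSet),
    Set.inter_eq_left.mpr Set.diff_subset,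
    measure_diff_null (hR.measure_zero volume), Real.volume_Ioo] at h1
  simp only [ENNReal.ofReal_eq_zero, sub_neg_eq_add] at h1
  linarith

lemma norm_toLp_sqrt {μ : Measure ℝ} {f : ℝ → ℂ} (hf : MemLp f 2 μ) :
    ‖hf.toLp f‖ = Real.sqrt (∫ x, ‖f x‖^2 ∂μ) := by
  rw [Lp.norm_toLp, hf.eLpNorm_eq_integral_rpow_norm two_ne_zero ENNReal.ofNat_ne_top]
  rw [ENNReal.toReal_ofReal (Real.rpow_nonneg (integral_nonneg fun x => by positivity) _)]
  have hi : (∫ a, ‖f a‖ ^ ((2:ℝ≥0∞)).toReal ∂μ) = ∫ x, ‖f x‖^2 ∂μ := by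
    refine integral_congr_ae (Filter.Eventually.of_forall fun x => ?_)
    show ‖f x‖ ^ (2:ℝ≥0∞).toReal = ‖f x‖ ^ (2:ℕ)
    rw [ENNReal.toReal_ofNat, ← Real.rpow_natCast ‖f x‖ 2]
    norm_num
  rw [hi, Real.sqrt_eq_rpow, ENNReal.toReal_ofNat]
  norm_num

lemma deriv_polysum (a : ℕ → ℂ) (M : ℕ) (x : ℝ) :
    deriv (fun y : ℝ => ∑ m ∈ Finset.range (M+1), a m * (y:ℂ)^m) x
      = ∑ m ∈ Finset.range (M+1), a m * ((m:ℂ) * (x:ℂ)^(m-1)) := by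
  have H : HasDerivAt (fun y : ℝ => ∑ m ∈ Finset.range (M+1), a m * (y:ℂ)^m)
      (∑ m ∈ Finset.range (M+1), a m * ((m:ℂ) * (x:ℂ)^(m-1))) x := by
    apply HasDerivAt.fun_sum
    intro m _
    have h1 : HasDerivAt (fun y : ℝ => (y:ℂ)^m) ((m:ℂ) * (x:ℂ)^(m-1)) x :=
      (hasDerivAt_pow m ((x:ℝ):ℂ)).comp_ofReal
    exact h1.const_mul (a m)
  exact H.deriv

lemma term_eq (h : ℝ) (β am : ℂ) (x : ℝ) (m : ℕ) :
    (h:ℂ) * (x:ℂ) * (am * ((m:ℂ) * (x:ℂ)^(m-1))) / Complex.I - β * (am * (x:ℂ)^m)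
      = (-(β + Complex.I * (h:ℂ) * (m:ℂ)) * am) * (x:ℂ)^m := by
  have hx : (m:ℂ) * (x:ℂ)^(m-1) * (x:ℂ) = (m:ℂ) * (x:ℂ)^m := by
    cases m with
    | zero => simp
    | succ k => rw [Nat.add_sub_cancel, mul_assoc, ← pow_succ]
  rw [Complex.div_I]
  linear_combination (-Complex.I * (h:ℂ) * am) * hx

noncomputable def Lmap (M : ℕ) (c : ℝ) :
    (Fin (M+1) → ℂ) →ₗ[ℂ] Lp ℂ 2 (volume.restrict (Ioo (-c) c)) where
  toFun v := (pfun_memLp M c v).toLp _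
  map_add' v w := by
    have h : pfun M (v + w) =ᵐ[volume.restrict (Ioo (-c) c)] pfun M v + pfun M w := by
      refine Filter.EventuallyEq.of_eq (funext fun x => ?_)
      simp [pfun, add_mul, Finset.sum_add_distrib]
    exact (MemLp.toLp_congr _ ((pfun_memLp M c v).add (pfun_memLp M c w)) h).trans
      (MemLp.toLp_add (pfun_memLp M c v) (pfun_memLp M c w)).symm
  map_smul' t v := by
    have h : pfun M (t • v) =ᵐ[volume.restrict (Ioo (-c) c)] t • pfun M v := by
      refine Filter.EventuallyEq.of_eq (funext fun x => ?_)
      simp [pfun, Finset.smul_sum, smul_mul_assoc, Finset.mul_sum, mul_assoc]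
    exact (MemLp.toLp_congr (pfun_memLp M c (t • v)) ((pfun_memLp M c v).const_smul t) h).trans
      (MemLp.toLp_const_smul t (pfun_memLp M c v)).symm

lemma Lmap_apply (M : ℕ) (c : ℝ) (v : Fin (M+1) → ℂ) :
    Lmap M c v = (pfun_memLp M c v).toLp (pfun M v) := rfl

lemma Lmap_norm (M : ℕ) (c : ℝ) (v : Fin (M+1) → ℂ) :
    ‖Lmap M c v‖ = Real.sqrt (∫ x in Ioo (-c) c, ‖pfun M v x‖^2) := by
  rw [Lmap_apply, norm_toLp_sqrt]

set_option maxHeartbeats 2000000 in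
theorem stmt9 (M : ℕ) (c Cβ : ℝ) (hc : 0 < c) (hCβ : 0 < Cβ) :
    ∃ C : ℝ, ∃ N : ℕ, 0 < C ∧ ∀ h ∈ Ioc (0:ℝ) 1, ∀ β : ℂ, ∀ a : ℕ → ℂ,
      (∀ m : ℕ, m ≤ M → h / Cβ ≤ ‖β + Complex.I * (h:ℂ) * (m:ℂ)‖) →
      Real.sqrt (∫ x in Ioo (-c) c,
          ‖∑ m ∈ Finset.range (M+1), a m * (x:ℂ) ^ m‖^2) ≤
        C * h⁻¹ ^ N * Real.sqrt (∫ x in Ioo (-c) c,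
          ‖(h:ℂ) * (x:ℂ) *
              deriv (fun y : ℝ => ∑ m ∈ Finset.range (M+1), a m * (y:ℂ) ^ m) x / Complex.I
            - β * ∑ m ∈ Finset.range (M+1), a m * (x:ℂ) ^ m‖^2) := by
  classical
  have hker : LinearMap.ker (Lmap M c) = ⊥ := by
    rw [LinearMap.ker_eq_bot']
    intro v hv
    refine pfun_eq_zero M c hc v ?_
    have : (pfun_memLp M c v).toLp (pfun M v) = (MemLp.zero).toLp (0 : ℝ → ℂ) := by
      rw [MemLp.toLp_zero]; exact hv
    rwa [MemLp.toLp_eq_toLp_iff] at this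
  obtain ⟨K, hK0, hKa⟩ := (Lmap M c).exists_antilipschitzWith hker
  set Lc := LinearMap.toContinuousLinearMap (Lmap M c) with hLc
  refine ⟨(‖Lc‖ + 1) * Cβ * ((K:ℝ) + 1), 1, by positivity, ?_⟩
  intro h hh β a hsmall
  set va : Fin (M+1) → ℂ := fun i => a i with hva
  set vb : Fin (M+1) → ℂ := fun i => -(β + Complex.I * (h:ℂ) * ((i:ℕ):ℂ)) * a i with hvb
  have hfa : ∀ x : ℝ, (∑ m ∈ Finset.range (M+1), a m * (x:ℂ) ^ m) = pfun M va x :=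
    fun x => by rw [pfun]; exact Finset.sum_range _
  -- LHS as norm
  have hLHS : Real.sqrt (∫ x in Ioo (-c) c,
      ‖∑ m ∈ Finset.range (M+1), a m * (x:ℂ) ^ m‖^2) = ‖Lmap M c va‖ := by
    simp only [hfa]
    exact (Lmap_norm M c va).symm
  -- RHS as norm
  have hQ : ∀ x : ℝ,
      (h:ℂ) * (x:ℂ) *
          deriv (fun y : ℝ => ∑ m ∈ Finset.range (M+1), a m * (y:ℂ) ^ m) x / Complex.I
        - β * ∑ m ∈ Finset.range (M+1), a m * (x:ℂ) ^ m = pfun M vb x := by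
    intro x
    rw [deriv_polysum, Finset.mul_sum, Finset.sum_div, Finset.mul_sum,
      ← Finset.sum_sub_distrib]
    rw [pfun, Finset.sum_range]
    exact Finset.sum_congr rfl fun m _ => term_eq h β (a m) x m
  have hRHS : Real.sqrt (∫ x in Ioo (-c) c,
      ‖(h:ℂ) * (x:ℂ) *
          deriv (fun y : ℝ => ∑ m ∈ Finset.range (M+1), a m * (y:ℂ) ^ m) x / Complex.I
        - β * ∑ m ∈ Finset.range (M+1), a m * (x:ℂ) ^ m‖^2) = ‖Lmap M c vb‖ := by
    simp only [hQ]
    exact (Lmap_norm M c vb).symm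
  rw [hLHS, hRHS, pow_one]
  have h0 : 0 < h := hh.1
  -- step 1
  have s1 : ‖Lmap M c va‖ ≤ ‖Lc‖ * ‖va‖ := by
    have := Lc.le_opNorm va
    simpa [hLc] using this
  -- step 2
  have s2 : ‖va‖ ≤ Cβ / h * ‖vb‖ := by
    refine (pi_norm_le_iff_of_nonneg (by positivity)).mpr fun i => ?_
    have h1 : h / Cβ ≤ ‖β + Complex.I * (h:ℂ) * ((i:ℕ):ℂ)‖ :=
      hsmall i (Nat.lt_succ_iff.mp i.isLt)
    have h2 : ‖vb i‖ = ‖β + Complex.I * (h:ℂ) * ((i:ℕ):ℂ)‖ * ‖a i‖ := by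
      rw [hvb]; rw [norm_mul, norm_neg]
    have h3 : ‖va i‖ ≤ Cβ / h * ‖vb i‖ := by
      rw [h2, hva]
      calc ‖a i‖ = Cβ / h * (h / Cβ * ‖a i‖) := by field_simp
        _ ≤ Cβ / h * (‖β + Complex.I * (h:ℂ) * ((i:ℕ):ℂ)‖ * ‖a i‖) := by
            refine mul_le_mul_of_nonneg_left ?_ (by positivity)
            exact mul_le_mul_of_nonneg_right h1 (norm_nonneg _)
    exact h3.trans (mul_le_mul_of_nonneg_left (norm_le_pi_norm vb i) (by positivity))
  -- step 3
  have s3 : ‖vb‖ ≤ (K:ℝ) * ‖Lmap M c vb‖ := by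
    have := hKa.le_mul_dist vb 0
    simpa [dist_eq_norm, map_zero] using this
  have hnn : (0:ℝ) ≤ ‖Lmap M c vb‖ := norm_nonneg _
  calc ‖Lmap M c va‖ ≤ ‖Lc‖ * (Cβ / h * ((K:ℝ) * ‖Lmap M c vb‖)) := by
        refine s1.trans (mul_le_mul_of_nonneg_left ?_ (norm_nonneg _))
        exact s2.trans (mul_le_mul_of_nonneg_left s3 (by positivity))
    _ ≤ (‖Lc‖ + 1) * Cβ * ((K:ℝ) + 1) * h⁻¹ * ‖Lmap M c vb‖ := by
        rw [div_eq_mul_inv]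
        have hK1 : (K:ℝ) ≤ (K:ℝ) + 1 := by linarith
        have hL1 : ‖Lc‖ ≤ ‖Lc‖ + 1 := by linarith
        have hinv : (0:ℝ) ≤ h⁻¹ := by positivity
        nlinarith [norm_nonneg Lc, hCβ.le, hnn, mul_nonneg (mul_nonneg hCβ.le hinv) hnn,
          K.coe_nonneg]
end

section
/- Let (z^j z̄^k)-decomposition solvability: let g be a smooth function on the disc {|z| ≤ R} ⊂ ℂ with Taylor expansion at 0 containing only terms c_{jk} z^j z̄^k with j ≠ k (equivalently, the average of g over every circle |z| = r is O(r^∞), i.e. g has zero angular mean to infinite order). Then for every N there are smooth b_N with g = {ζ, b_N} + O(|z|^N) near 0, where ζ = |z|²/2 and {·,·} is the Poisson bracket for the symplectic form dξ∧dx, z = x + iξ. Specifically, the formal solution takes z^j z̄^k ↦ z^j z̄^k/(i(k−j)). -/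
open Set
open Real

noncomputable section
variable {k : ℕ} 

abbrev MLM (k : ℕ) := ContinuousMultilinearMap ℝ (fun _ : Fin k => ℝ × ℝ) ℝ

def Jmap : (ℝ × ℝ) →L[ℝ] (ℝ × ℝ) :=
  (ContinuousLinearMap.snd ℝ ℝ ℝ).prod (-(ContinuousLinearMap.fst ℝ ℝ ℝ))

def rot (t : ℝ) (z : ℝ × ℝ) : ℝ × ℝ := Real.cos t • z + Real.sin t • Jmap z

/-- evaluation of the multilinear map on the diagonal -/
def pm (Φ : MLM k) (z : ℝ × ℝ) : ℝ := Φ (fun _ => z)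

lemma pm_smul (Φ : MLM k) (r : ℝ) (z : ℝ × ℝ) : pm Φ (r • z) = r ^ k * pm Φ z := by
  unfold pm
  have := Φ.toMultilinearMap.map_smul_univ (fun _ : Fin k => r) (fun _ => z)
  simpa [Finset.prod_const, smul_eq_mul] using this

lemma continuous_pm (Φ : MLM k) : Continuous (pm Φ) := by
  unfold pm
  exact Φ.cont.comp (continuous_pi fun _ => continuous_id)

/-- the linear map substituting `z` in slots of `s` and `J z` elsewhere -/
def Amap (s : Finset (Fin k)) : (ℝ × ℝ) →L[ℝ] (Fin k → ℝ × ℝ) :=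
  ContinuousLinearMap.pi (fun i => if i ∈ s then ContinuousLinearMap.id ℝ (ℝ × ℝ) else Jmap)

lemma Amap_apply (s : Finset (Fin k)) (z : ℝ × ℝ) [DecidableEq (Fin k)] :
    Amap s z = s.piecewise (fun _ => z) (fun _ => Jmap z) := by
  funext i
  simp [Amap, Finset.piecewise, ContinuousLinearMap.pi_apply]
  split <;> simp

/-- expansion of `pm Φ (rot t z)` -/
lemma pm_rot_expand (Φ : MLM k) (t : ℝ) (z : ℝ × ℝ) :
    pm Φ (rot t z) = ∑ s : Finset (Fin k),
      Real.cos t ^ s.card * Real.sin t ^ (k - s.card) * Φ (Amap s z) := by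
  classical
  unfold pm rot
  have h := Φ.toMultilinearMap.map_add_univ
      (fun _ : Fin k => Real.cos t • z) (fun _ : Fin k => Real.sin t • Jmap z)
  have h0 : (fun _i : Fin k => Real.cos t • z + Real.sin t • Jmap z)
      = (fun _ : Fin k => Real.cos t • z) + (fun _ : Fin k => Real.sin t • Jmap z) := rfl
  rw [h0]
  rw [show Φ ((fun _ : Fin k => Real.cos t • z) + fun _ : Fin k => Real.sin t • Jmap z)
      = Φ.toMultilinearMap ((fun _ : Fin k => Real.cos t • z) + fun _ : Fin k => Real.sin t • Jmap z) from rfl, h]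
  apply Finset.sum_congr rfl
  intro s _
  have hpw : s.piecewise (fun _ : Fin k => Real.cos t • z) (fun _ : Fin k => Real.sin t • Jmap z)
      = fun i => (if i ∈ s then Real.cos t else Real.sin t) •
          (s.piecewise (fun _ : Fin k => z) (fun _ : Fin k => Jmap z) i) := by
    funext i
    by_cases hi : i ∈ s <;> simp [Finset.piecewise, hi]
  rw [hpw]
  have h2 := Φ.toMultilinearMap.map_smul_univ
      (fun i : Fin k => if i ∈ s then Real.cos t else Real.sin t)
      (s.piecewise (fun _ : Fin k => z) (fun _ : Fin k => Jmap z))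
  rw [h2]
  have hprod : (∏ i : Fin k, (if i ∈ s then Real.cos t else Real.sin t))
      = Real.cos t ^ s.card * Real.sin t ^ (k - s.card) := by
    have : (fun i : Fin k => if i ∈ s then Real.cos t else Real.sin t)
        = s.piecewise (fun _ => Real.cos t) (fun _ => Real.sin t) := by
      funext i; simp [Finset.piecewise]
    rw [this, Finset.prod_piecewise]
    simp [Finset.prod_const, Finset.card_compl, Finset.univ_inter, Finset.sdiff_eq_inter_compl]
  rw [hprod, Amap_apply, smul_eq_mul]
  rfl

/-- coefficient for the averaged solution -/
def betaCoef (k : ℕ) (s : Finset (Fin k)) : ℝ :=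
  (2 * Real.pi)⁻¹ * ∫ t in (0:ℝ)..(2 * Real.pi), t * (Real.cos t ^ s.card * Real.sin t ^ (k - s.card))

/-- the solution of the cohomological equation for the homogeneous piece `Φ` -/
def bk (Φ : MLM k) (z : ℝ × ℝ) : ℝ := ∑ s : Finset (Fin k), betaCoef k s * Φ (Amap s z)

lemma contDiff_bk (Φ : MLM k) : ContDiff ℝ (⊤ : ℕ∞) (bk Φ) := by
  apply ContDiff.sum
  intro s _
  exact contDiff_const.mul (Φ.contDiff.comp (Amap s).contDiff)

lemma bk_eq_integral (Φ : MLM k) (z : ℝ × ℝ) :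
    bk Φ z = (2 * Real.pi)⁻¹ * ∫ t in (0:ℝ)..(2 * Real.pi), t * pm Φ (rot t z) := by
  have : ∀ t : ℝ, t * pm Φ (rot t z) = ∑ s : Finset (Fin k),
      t * (Real.cos t ^ s.card * Real.sin t ^ (k - s.card)) * Φ (Amap s z) := by
    intro t
    rw [pm_rot_expand, Finset.mul_sum]
    apply Finset.sum_congr rfl; intro s _; ring
  rw [intervalIntegral.integral_congr (g := fun t => ∑ s : Finset (Fin k),
      t * (Real.cos t ^ s.card * Real.sin t ^ (k - s.card)) * Φ (Amap s z))
      (fun t _ => this t)]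
  rw [intervalIntegral.integral_finset_sum]
  · rw [bk, Finset.mul_sum]
    apply Finset.sum_congr rfl
    intro s _
    rw [intervalIntegral.integral_mul_const, betaCoef]
    ring
  · intro s _
    apply Continuous.intervalIntegrable
    fun_prop

lemma Jmap_apply (z : ℝ × ℝ) : Jmap z = (z.2, -z.1) := rfl

lemma rot_fst (t : ℝ) (z : ℝ × ℝ) : (rot t z).1 = z.1 * Real.cos t + z.2 * Real.sin t := by
  simp [rot, Jmap_apply]; ring

lemma rot_snd (t : ℝ) (z : ℝ × ℝ) : (rot t z).2 = z.2 * Real.cos t - z.1 * Real.sin t := by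
  simp [rot, Jmap_apply]; ring

@[simp] lemma rot_zero (z : ℝ × ℝ) : rot 0 z = z := by simp [rot]

lemma rot_rot (t s : ℝ) (z : ℝ × ℝ) : rot t (rot s z) = rot (t + s) z := by
  apply Prod.ext <;>
  simp [rot_fst, rot_snd, Real.cos_add, Real.sin_add] <;> ring

lemma rot_periodic (z : ℝ × ℝ) : Function.Periodic (fun t => rot t z) (2 * Real.pi) := by
  intro t
  apply Prod.ext <;>
  simp [rot_fst, rot_snd, Real.cos_add_two_pi, Real.sin_add_two_pi]

lemma rot_smul (t r : ℝ) (z : ℝ × ℝ) : rot t (r • z) = r • rot t z := by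
  apply Prod.ext <;> simp [rot_fst, rot_snd] <;> ring

lemma continuous_rot (z : ℝ × ℝ) : Continuous (fun t => rot t z) := by
  unfold rot; fun_prop

lemma hasDerivAt_rot (z : ℝ × ℝ) (t : ℝ) :
    HasDerivAt (fun u => rot u z) (Jmap (rot t z)) t := by
  have h1 : HasDerivAt (fun u => (rot u z).1) (z.1 * (-Real.sin t) + z.2 * Real.cos t) t := by
    simp only [rot_fst]
    exact ((Real.hasDerivAt_cos t).const_mul z.1).add ((Real.hasDerivAt_sin t).const_mul z.2)
  have h2 : HasDerivAt (fun u => (rot u z).2) (z.2 * (-Real.sin t) - z.1 * Real.cos t) t := by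
    simp only [rot_snd]
    exact ((Real.hasDerivAt_cos t).const_mul z.2).sub ((Real.hasDerivAt_sin t).const_mul z.1)
  have h := h1.prodMk h2
  convert h using 1
  apply Prod.ext <;> simp [rot_fst, rot_snd, Jmap_apply] <;> ring

/-- the key derivative identity -/
lemma fderiv_bk (Φ : MLM k) (z : ℝ × ℝ) :
    fderiv ℝ (bk Φ) z (Jmap z)
      = pm Φ z - (2 * Real.pi)⁻¹ * ∫ t in (0:ℝ)..(2 * Real.pi), pm Φ (rot t z) := by
  classical
  set Q : ℝ → ℝ := fun u => pm Φ (rot u z) with hQ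
  have hQc : Continuous Q := (continuous_pm Φ).comp (continuous_rot z)
  have hQp : Function.Periodic Q (2 * Real.pi) := by
    intro u; simp only [hQ]; rw [show rot (u + 2 * Real.pi) z = rot u z from rot_periodic z u]
  set M : ℝ := ∫ t in (0:ℝ)..(2 * Real.pi), Q t with hM
  set I : ℝ → ℝ := fun y => ∫ x in (0:ℝ)..y, x * Q x with hI
  have hxQc : Continuous fun x => x * Q x := continuous_id.mul hQc
  have key : ∀ u, bk Φ (rot u z) = (2 * Real.pi)⁻¹ * (I (2 * Real.pi + u) - I u - u * M) := by
    intro u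
    rw [bk_eq_integral]
    congr 1
    have e1 : ∀ t ∈ uIcc (0:ℝ) (2 * Real.pi),
        t * pm Φ (rot t (rot u z)) = ((t + u) - u) * Q (t + u) := by
      intro t _
      rw [rot_rot]
      simp only [hQ]
      ring_nf
    rw [intervalIntegral.integral_congr e1]
    have e2 : (∫ t in (0:ℝ)..(2 * Real.pi), ((t + u) - u) * Q (t + u))
        = ∫ x in (0 + u)..(2 * Real.pi + u), (x - u) * Q x := by
      rw [← intervalIntegral.integral_comp_add_right (fun x => (x - u) * Q x) u]
    rw [e2]
    have e3 : (∫ x in (0 + u)..(2 * Real.pi + u), (x - u) * Q x)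
        = (∫ x in u..(2 * Real.pi + u), x * Q x) - u * ∫ x in u..(2 * Real.pi + u), Q x := by
      rw [zero_add]
      rw [← intervalIntegral.integral_const_mul]
      rw [← intervalIntegral.integral_sub (hxQc.intervalIntegrable _ _)
          ((show Continuous fun x => u * Q x from continuous_const.mul hQc).intervalIntegrable _ _)]
      congr 1; funext x; ring
    rw [e3]
    have e4 : (∫ x in u..(2 * Real.pi + u), Q x) = M := by
      have := hQp.intervalIntegral_add_eq u 0
      rw [zero_add] at this
      rw [add_comm (2 * Real.pi) u, this]
    have e5 : (∫ x in u..(2 * Real.pi + u), x * Q x) = I (2 * Real.pi + u) - I u := by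
      have hadj := intervalIntegral.integral_add_adjacent_intervals
        (a := (0:ℝ)) (b := u) (c := 2 * Real.pi + u) (μ := MeasureTheory.volume)
        (f := fun x => x * Q x)
        (hxQc.intervalIntegrable _ _) (hxQc.intervalIntegrable _ _)
      simp only [hI]
      linarith [hadj]
    rw [e4, e5]
  -- derivative of the right-hand side at 0
  have hIy : ∀ y : ℝ, HasDerivAt I (y * Q y) y := fun y =>
    (Continuous.integral_hasStrictDerivAt hxQc 0 y).hasDerivAt
  have hinner : HasDerivAt (fun u : ℝ => 2 * Real.pi + u) 1 0 := by
    simpa using (hasDerivAt_id (0:ℝ)).const_add (2 * Real.pi)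
  have h1 : HasDerivAt (fun u => I (2 * Real.pi + u))
      (((2 * Real.pi + 0) * Q (2 * Real.pi + 0)) * 1) 0 :=
    (hIy (2 * Real.pi + 0)).comp 0 hinner
  have h2 : HasDerivAt I (0 * Q 0) 0 := hIy 0
  have h3 : HasDerivAt (fun u : ℝ => u * M) M 0 := by
    simpa using (hasDerivAt_id (0:ℝ)).mul_const M
  have hQ2pi : Q (2 * Real.pi + 0) = Q 0 := by
    rw [add_comm]; exact hQp 0
  have hF : HasDerivAt (fun u => (2 * Real.pi)⁻¹ * (I (2 * Real.pi + u) - I u - u * M))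
      ((2 * Real.pi)⁻¹ * ((((2 * Real.pi + 0) * Q (2 * Real.pi + 0)) * 1) - 0 * Q 0 - M)) 0 :=
    ((h1.sub h2).sub h3).const_mul _
  -- derivative of the left-hand side at 0
  have hb : HasFDerivAt (bk Φ) (fderiv ℝ (bk Φ) z) z :=
    (((contDiff_bk Φ).differentiable (by simp)) z).hasFDerivAt
  have hγ : HasDerivAt (fun u => rot u z) (Jmap z) 0 := by
    simpa using hasDerivAt_rot z 0
  have hb' : HasFDerivAt (bk Φ) (fderiv ℝ (bk Φ) z) (rot 0 z) := by rw [rot_zero]; exact hb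
  have hcomp : HasDerivAt (fun u => bk Φ (rot u z)) (fderiv ℝ (bk Φ) z (Jmap z)) 0 :=
    hb'.comp_hasDerivAt (f := fun u => rot u z) 0 hγ
  have hfun : (fun u => bk Φ (rot u z))
      = (fun u => (2 * Real.pi)⁻¹ * (I (2 * Real.pi + u) - I u - u * M)) := funext key
  rw [hfun] at hcomp
  have := hcomp.unique hF
  rw [this, hQ2pi]
  have hπ : (2 * Real.pi) ≠ 0 := by positivity
  have hQ0 : Q 0 = pm Φ z := by simp [hQ]
  rw [hQ0] at *
  field_simp
  ring

/-- If the circle average at radius one of `pm Φ` vanishes, then all rotational averages vanish. -/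
lemma mean_rot_eq_zero (Φ : MLM k)
    (hA : (∫ φ in (0:ℝ)..(2 * Real.pi), pm Φ (Real.cos φ, Real.sin φ)) = 0) (z : ℝ × ℝ) :
    (∫ t in (0:ℝ)..(2 * Real.pi), pm Φ (rot t z)) = 0 := by
  classical
  rcases Nat.eq_zero_or_pos k with hk | hk
  · -- `k = 0`: `pm Φ` is constant
    subst hk
    have hconst : ∀ w : ℝ × ℝ, pm Φ w = pm Φ (Real.cos 0, Real.sin 0) := by
      intro w; unfold pm; congr 1; funext i; exact absurd i.2 (by omega)
    calc (∫ t in (0:ℝ)..(2 * Real.pi), pm Φ (rot t z))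
        = ∫ φ in (0:ℝ)..(2 * Real.pi), pm Φ (Real.cos φ, Real.sin φ) := by
          apply intervalIntegral.integral_congr; intro t _
          show pm Φ (rot t z) = pm Φ (Real.cos t, Real.sin t)
          rw [hconst (rot t z), hconst (Real.cos t, Real.sin t)]
      _ = 0 := hA
  · rcases eq_or_ne z 0 with rfl | hz
    · have h0 : ∀ t : ℝ, pm Φ (rot t 0) = 0 := by
        intro t
        have : rot t (0 : ℝ × ℝ) = 0 := by
          apply Prod.ext <;> simp [rot_fst, rot_snd]
        rw [this]
        unfold pm
        exact Φ.map_coord_zero (⟨0, hk⟩ : Fin k) rfl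
      simp [intervalIntegral.integral_congr (g := fun _ => (0:ℝ)) (fun t _ => h0 t)]
    · -- polar decomposition
      set w : ℂ := Complex.mk z.1 z.2 with hw
      have hw0 : w ≠ 0 := by
        intro h
        apply hz
        have h1 := congrArg Complex.re h
        have h2 := congrArg Complex.im h
        simp only [hw, Complex.zero_re, Complex.zero_im] at h1 h2
        exact Prod.ext h1 h2
      set r : ℝ := ‖w‖ with hr
      have hr0 : r ≠ 0 := by simpa [hr] using hw0
      set θ : ℝ := Complex.arg w with hθ
      have hzdec : z = r • (Real.cos θ, Real.sin θ) := by
        have hc : Real.cos θ = z.1 / r := Complex.cos_arg hw0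
        have hs : Real.sin θ = z.2 / r := Complex.sin_arg w
        apply Prod.ext <;> simp [hc, hs] <;> field_simp
      have hcirc : ∀ t : ℝ, rot t (Real.cos θ, Real.sin θ)
          = (Real.cos (θ - t), Real.sin (θ - t)) := by
        intro t
        apply Prod.ext <;> simp [rot_fst, rot_snd, Real.cos_sub, Real.sin_sub] <;> ring
      have hint : ∀ t : ℝ, pm Φ (rot t z) = r ^ k * pm Φ (Real.cos (θ - t), Real.sin (θ - t)) := by
        intro t
        rw [hzdec, rot_smul, pm_smul, hcirc]
      rw [intervalIntegral.integral_congr (g := fun t => r ^ k *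
          pm Φ (Real.cos (θ - t), Real.sin (θ - t))) (fun t _ => hint t)]
      rw [intervalIntegral.integral_const_mul]
      set f : ℝ → ℝ := fun φ => pm Φ (Real.cos φ, Real.sin φ) with hf
      have hfper : Function.Periodic f (2 * Real.pi) := by
        intro φ; simp [hf, Real.cos_add_two_pi, Real.sin_add_two_pi]
      have e1 : (∫ t in (0:ℝ)..(2 * Real.pi), pm Φ (Real.cos (θ - t), Real.sin (θ - t)))
          = ∫ x in (θ - 2 * Real.pi)..(θ - 0), f x :=
        intervalIntegral.integral_comp_sub_left f θ
      have e2 : (∫ x in (θ - 2 * Real.pi)..(θ - 2 * Real.pi + 2 * Real.pi), f x)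
          = ∫ x in (0:ℝ)..(0 + 2 * Real.pi), f x := hfper.intervalIntegral_add_eq _ 0
      have e3 : θ - 2 * Real.pi + 2 * Real.pi = θ - 0 := by ring
      rw [e1, ← e3, e2]
      simp only [zero_add]
      rw [hf] at *
      rw [hA]
      ring

/-- within-iterated-derivative equals the global one for globally smooth functions -/
lemma iteratedDerivWithin_eq_iteratedDeriv' {h : ℝ → ℝ} (hh : ContDiff ℝ (⊤:ℕ∞) h)
    {s : Set ℝ} (hs : UniqueDiffOn ℝ s) {x : ℝ} (hx : x ∈ s) (m : ℕ) :
    iteratedDerivWithin m h s x = iteratedDeriv m h x := by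
  have h1 : HasFTaylorSeriesUpTo (⊤:ℕ∞) h (ftaylorSeries ℝ h) :=
    contDiff_iff_ftaylorSeries.mp hh
  have e1 : ftaylorSeries ℝ h x m = iteratedFDeriv ℝ m h x :=
    h1.eq_iteratedFDeriv (by exact_mod_cast le_top) x
  have e2 : ftaylorSeries ℝ h x m = iteratedFDerivWithin ℝ m h s x :=
    (h1.hasFTaylorSeriesUpToOn s).eq_iteratedFDerivWithin_of_uniqueDiffOn (by exact_mod_cast le_top) hs hx
  rw [iteratedDerivWithin_eq_iteratedFDerivWithin, iteratedDeriv, ← e1, ← e2]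

/-- Multivariate Taylor bound on a ball, via 1-D Taylor along rays. -/
lemma taylor_bound {G : ℝ × ℝ → ℝ} (hG : ContDiff ℝ (⊤:ℕ∞) G) (n : ℕ) :
    ∃ C : ℝ, 0 ≤ C ∧ ∀ z : ℝ × ℝ, ‖z‖ ≤ 1 →
      |G z - ∑ k ∈ Finset.range (n+1), ((k.factorial : ℝ))⁻¹ *
        iteratedFDeriv ℝ k G 0 (fun _ => z)| ≤ C * ‖z‖ ^ (n+1) := by
  -- bound for the (n+1)-st derivative on the closed unit ball
  obtain ⟨M, hM⟩ : ∃ M : ℝ, ∀ y ∈ Metric.closedBall (0:ℝ×ℝ) 1,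
      ‖iteratedFDeriv ℝ (n+1) G y‖ ≤ M := by
    obtain ⟨M, hM⟩ := (isCompact_closedBall (0:ℝ×ℝ) 1).exists_bound_of_continuousOn
      ((hG.continuous_iteratedFDeriv (by exact_mod_cast le_top)).continuousOn)
    exact ⟨M, hM⟩
  have hM0 : 0 ≤ M := le_trans (norm_nonneg _) (hM 0 (Metric.mem_closedBall_self zero_le_one))
  refine ⟨M / n.factorial, by positivity, ?_⟩
  intro z hz
  set L : ℝ →L[ℝ] ℝ × ℝ := ContinuousLinearMap.toSpanSingleton ℝ z with hL
  set h : ℝ → ℝ := G ∘ L with hh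
  have hhC : ContDiff ℝ (⊤:ℕ∞) h := hG.comp_continuousLinearMap
  -- identify iterated derivatives of h
  have hiter : ∀ (m : ℕ) (y : ℝ), iteratedDeriv m h y
      = iteratedFDeriv ℝ m G (y • z) (fun _ => z) := by
    intro m y
    rw [iteratedDeriv]
    have := L.iteratedFDeriv_comp_right hG (x := y) (i := m) (by exact_mod_cast le_top)
    rw [hh, this]
    have hLy : L y = y • z := rfl
    rw [hLy, ContinuousMultilinearMap.compContinuousLinearMap_apply]
    congr 1
    funext i
    show (1:ℝ) • z = z
    rw [one_smul]
  have hI : UniqueDiffOn ℝ (Icc (0:ℝ) 1) := uniqueDiffOn_Icc one_pos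
  have hbound : ∀ y ∈ Icc (0:ℝ) 1,
      ‖iteratedDerivWithin (n+1) h (Icc 0 1) y‖ ≤ M * ‖z‖ ^ (n+1) := by
    intro y hy
    rw [iteratedDerivWithin_eq_iteratedDeriv' hhC hI hy, hiter]
    calc ‖iteratedFDeriv ℝ (n+1) G (y • z) (fun _ => z)‖
        ≤ ‖iteratedFDeriv ℝ (n+1) G (y • z)‖ * ∏ _i : Fin (n+1), ‖z‖ :=
          (iteratedFDeriv ℝ (n+1) G (y • z)).le_opNorm _
      _ ≤ M * ‖z‖ ^ (n+1) := by
          rw [Finset.prod_const, Finset.card_univ, Fintype.card_fin]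
          apply mul_le_mul_of_nonneg_right _ (by positivity)
          apply hM
          rw [Metric.mem_closedBall, dist_zero_right, norm_smul]
          calc ‖y‖ * ‖z‖ ≤ 1 * 1 := by
                apply mul_le_mul _ hz (norm_nonneg _) zero_le_one
                rw [Real.norm_eq_abs, abs_le]; constructor <;> linarith [hy.1, hy.2]
            _ = 1 := one_mul 1
  have htay := taylor_mean_remainder_bound (f := h) (a := 0) (b := 1) (x := 1)
    (n := n) zero_le_one (hhC.of_le (by exact_mod_cast le_top)).contDiffOn (by norm_num) hbound
  -- identify the Taylor polynomial
  have hpoly : taylorWithinEval h n (Icc 0 1) 0 1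
      = ∑ k ∈ Finset.range (n+1), ((k.factorial : ℝ))⁻¹ *
          iteratedFDeriv ℝ k G 0 (fun _ => z) := by
    rw [taylor_within_apply]
    apply Finset.sum_congr rfl
    intro k _
    rw [iteratedDerivWithin_eq_iteratedDeriv' hhC hI (by norm_num), hiter]
    rw [zero_smul, smul_eq_mul]
    ring_nf
  have hval : h 1 = G z := by
    show G (L 1) = G z
    congr 1
    show (1:ℝ) • z = z
    rw [one_smul]
  rw [hpoly, hval] at htay
  calc |G z - ∑ k ∈ Finset.range (n+1), ((k.factorial : ℝ))⁻¹ *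
        iteratedFDeriv ℝ k G 0 (fun _ => z)| ≤ M * ‖z‖^(n+1) * (1-0)^(n+1) / n.factorial := htay
    _ = M / n.factorial * ‖z‖^(n+1) := by ring

/-- A polynomial which is `O(r^n)` on `(0, ε]` has vanishing coefficients below degree `n`. -/
lemma poly_coeff_zero : ∀ (n : ℕ) (a : ℕ → ℝ) (C ε : ℝ), 0 < ε →
    (∀ r ∈ Ioc (0:ℝ) ε, |∑ k ∈ Finset.range n, a k * r ^ k| ≤ C * r ^ n) →
    ∀ k < n, a k = 0 := by
  intro n
  induction n with
  | zero => intro a C ε hε hb k hk; omega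
  | succ n IH =>
    intro a C ε hε hb
    have ha0 : a 0 = 0 := by
      set p : ℝ → ℝ := fun r => ∑ k ∈ Finset.range (n+1), a k * r ^ k with hp
      have hpc : Continuous p := by
        apply continuous_finset_sum; intro k _; fun_prop
      have hp0 : p 0 = a 0 := by
        show (∑ k ∈ Finset.range (n+1), a k * (0:ℝ) ^ k) = a 0
        rw [Finset.sum_range_succ']
        simp
      have h1 : Filter.Tendsto (fun r => |p r|) (nhdsWithin 0 (Ioi 0)) (nhds |a 0|) := by
        rw [← hp0]
        exact (((hpc.tendsto 0).mono_left nhdsWithin_le_nhds).abs)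
      have h2 : Filter.Tendsto (fun r : ℝ => C * r ^ (n+1)) (nhdsWithin 0 (Ioi 0)) (nhds 0) := by
        have : Filter.Tendsto (fun r : ℝ => C * r ^ (n+1)) (nhds 0) (nhds (C * 0 ^ (n+1))) :=
          (Continuous.tendsto (by fun_prop) 0)
        simp only [zero_pow (Nat.succ_ne_zero n), mul_zero] at this
        exact this.mono_left nhdsWithin_le_nhds
      have hle : |a 0| ≤ 0 := by
        apply le_of_tendsto_of_tendsto h1 h2
        filter_upwards [Ioc_mem_nhdsGT_of_mem (Set.left_mem_Ico.mpr hε)] with r hr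
        exact hb r hr
      exact abs_eq_zero.mp (le_antisymm hle (abs_nonneg _))
    have hq : ∀ r ∈ Ioc (0:ℝ) ε, |∑ k ∈ Finset.range n, a (k+1) * r ^ k| ≤ C * r ^ n := by
      intro r hr
      have hrpos : 0 < r := hr.1
      have hsplit : ∑ k ∈ Finset.range (n+1), a k * r ^ k
          = r * ∑ k ∈ Finset.range n, a (k+1) * r ^ k := by
        rw [Finset.sum_range_succ', ha0, Finset.mul_sum]
        simp only [pow_zero, mul_one, zero_mul, add_zero]
        apply Finset.sum_congr rfl
        intro k _; ring
      have := hb r hr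
      rw [hsplit, abs_mul, abs_of_pos hrpos] at this
      have h2 : r * |∑ k ∈ Finset.range n, a (k+1) * r ^ k| ≤ r * (C * r ^ n) := by
        calc r * |∑ k ∈ Finset.range n, a (k+1) * r ^ k| ≤ C * r ^ (n+1) := this
          _ = r * (C * r ^ n) := by ring
      exact le_of_mul_le_mul_left h2 hrpos
    intro k hk
    rcases Nat.eq_zero_or_pos k with rfl | hkpos
    · exact ha0
    · obtain ⟨k', rfl⟩ := Nat.exists_eq_succ_of_ne_zero (Nat.pos_iff_ne_zero.mp hkpos)
      exact IH (fun j => a (j+1)) C ε hε hq k' (by omega)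

theorem stmt12 (R : ℝ) (hR : 0 < R) (g : ℝ × ℝ → ℝ)
    (hg : ContDiffOn ℝ (⊤ : ℕ∞) g (Metric.closedBall 0 R))
    -- `g` has zero angular mean to infinite order at the origin:
    (hmean : ∀ N : ℕ, ∃ C : ℝ, ∀ r ∈ Ioc (0:ℝ) R,
      |∫ φ in (0:ℝ)..(2*Real.pi), g (r * Real.cos φ, r * Real.sin φ)| ≤ C * r ^ N) :
    -- for every `N` there is a smooth `b` with `g = {ζ, b} + O(|z|^N)` near `0`,
    -- where `ζ = (x²+ξ²)/2` and `{ζ, b}(z) = ξ ∂_x b − x ∂_ξ b = (db)(z.2, −z.1)`: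
    ∀ N : ℕ, ∃ b : ℝ × ℝ → ℝ, ContDiff ℝ (⊤ : ℕ∞) b ∧
      ∃ C : ℝ, ∃ ε : ℝ, 0 < ε ∧ ε ≤ R ∧ ∀ z : ℝ × ℝ, ‖z‖ ≤ ε →
        |g z - fderiv ℝ b z (z.2, -z.1)| ≤ C * ‖z‖ ^ N := by
  classical
  -- extend `g` smoothly by a cutoff
  set χ : ContDiffBump (0 : ℝ × ℝ) :=
    ⟨R/2, 3*R/4, by positivity, by linarith⟩ with hχ
  set G : ℝ × ℝ → ℝ := fun z => χ z * g z with hGdef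
  have hGs : ContDiff ℝ (⊤ : ℕ∞) G := by
    rw [contDiff_iff_contDiffAt]
    intro x
    by_cases hx : x ∈ Metric.ball (0 : ℝ × ℝ) R
    · have hgat : ContDiffAt ℝ (⊤ : ℕ∞) g x :=
        hg.contDiffAt (Filter.mem_of_superset (Metric.isOpen_ball.mem_nhds hx)
          Metric.ball_subset_closedBall)
      exact χ.contDiffAt.mul hgat
    · have hU : (Metric.closedBall (0 : ℝ × ℝ) (3*R/4))ᶜ ∈ nhds x := by
        apply (Metric.isClosed_closedBall.isOpen_compl).mem_nhds
        simp only [mem_compl_iff, Metric.mem_closedBall, not_le]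
        have : R ≤ dist x 0 := by
          simpa [Metric.mem_ball, not_lt] using hx
        linarith
      have hev : G =ᶠ[nhds x] (fun _ => (0:ℝ)) := by
        filter_upwards [hU] with y hy
        have h0 : χ y = 0 := by
          apply χ.zero_of_le_dist
          simp only [mem_compl_iff, Metric.mem_closedBall, not_le] at hy
          exact le_of_lt hy
        simp [hGdef, h0]
      exact (contDiffAt_const (c := (0:ℝ))).congr_of_eventuallyEq hev
  have heq : ∀ z : ℝ × ℝ, ‖z‖ ≤ R/2 → G z = g z := by
    intro z hz
    have h1 : χ z = 1 := by
      apply χ.one_of_mem_closedBall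
      simpa [Metric.mem_closedBall, dist_zero_right] using hz
    simp [hGdef, h1]
  intro N
  set N' : ℕ := max N 1 with hN'
  obtain ⟨n, hn⟩ : ∃ n, N' = n + 1 := ⟨N' - 1, by omega⟩
  -- Taylor expansion
  obtain ⟨C₁, hC₁0, htay⟩ := taylor_bound hGs n
  set Φk : ∀ k : ℕ, MLM k := fun k => iteratedFDeriv ℝ k G 0 with hΦk
  -- circle means of the homogeneous pieces vanish
  obtain ⟨Cg, hCg⟩ := hmean N'
  set a : ℕ → ℝ := fun k => ∫ φ in (0:ℝ)..(2*Real.pi), pm (Φk k) (Real.cos φ, Real.sin φ)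
    with ha
  set ε₂ : ℝ := min (R/2) 1 with hε₂
  have hε₂pos : 0 < ε₂ := by positivity
  have hacirc : ∀ (r : ℝ) (φ : ℝ), 0 ≤ r →
      ((r * Real.cos φ, r * Real.sin φ) : ℝ × ℝ) = r • (Real.cos φ, Real.sin φ) := by
    intro r φ _; rfl
  have hnormcirc : ∀ (r : ℝ) (φ : ℝ), 0 ≤ r →
      ‖((r * Real.cos φ, r * Real.sin φ) : ℝ × ℝ)‖ ≤ r := by
    intro r φ hr
    rw [Prod.norm_def]
    apply max_le <;>
    · rw [Real.norm_eq_abs, abs_mul, abs_of_nonneg hr]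
      calc r * |_| ≤ r * 1 := by
            apply mul_le_mul_of_nonneg_left _ hr
            first
            | exact Real.abs_cos_le_one φ
            | exact Real.abs_sin_le_one φ
        _ = r := mul_one r
  have hcont_pm : ∀ k, Continuous fun φ : ℝ =>
      pm (Φk k) (Real.cos φ, Real.sin φ) := by
    intro k
    exact (continuous_pm (Φk k)).comp (Real.continuous_cos.prodMk Real.continuous_sin)
  have hP : ∀ r : ℝ, 0 ≤ r →
      (∫ φ in (0:ℝ)..(2*Real.pi), ∑ k ∈ Finset.range (n+1),
        (k.factorial : ℝ)⁻¹ * pm (Φk k) (r * Real.cos φ, r * Real.sin φ))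
      = ∑ k ∈ Finset.range (n+1), ((k.factorial : ℝ)⁻¹ * a k) * r ^ k := by
    intro r hr
    rw [intervalIntegral.integral_finset_sum]
    · apply Finset.sum_congr rfl
      intro k _
      have hpt : ∀ φ : ℝ, (k.factorial : ℝ)⁻¹ * pm (Φk k) (r * Real.cos φ, r * Real.sin φ)
          = ((k.factorial : ℝ)⁻¹ * r ^ k) * pm (Φk k) (Real.cos φ, Real.sin φ) := by
        intro φ
        rw [hacirc r φ hr, pm_smul]
        ring
      rw [intervalIntegral.integral_congr (fun φ _ => hpt φ)]
      rw [intervalIntegral.integral_const_mul]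
      ring
    · intro k _
      apply Continuous.intervalIntegrable
      exact continuous_const.mul ((continuous_pm (Φk k)).comp
        ((continuous_const.mul Real.continuous_cos).prodMk
          (continuous_const.mul Real.continuous_sin)))
  have hameanzero : ∀ k < n + 1, a k = 0 := by
    have hbound : ∀ r ∈ Ioc (0:ℝ) ε₂,
        |∑ k ∈ Finset.range (n+1), ((k.factorial : ℝ)⁻¹ * a k) * r ^ k|
          ≤ (Cg + 2 * Real.pi * C₁) * r ^ (n+1) := by
      intro r hr
      have hr0 : 0 < r := hr.1
      have hrR2 : r ≤ R/2 := le_trans hr.2 (min_le_left _ _)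
      have hr1 : r ≤ 1 := le_trans hr.2 (min_le_right _ _)
      have hrR : r ≤ R := by linarith
      -- the integral of G equals the integral of g
      have hTS : (∫ φ in (0:ℝ)..(2*Real.pi), G (r * Real.cos φ, r * Real.sin φ))
          = ∫ φ in (0:ℝ)..(2*Real.pi), g (r * Real.cos φ, r * Real.sin φ) := by
        apply intervalIntegral.integral_congr
        intro φ _
        exact heq _ (le_trans (hnormcirc r φ hr0.le) hrR2)
      -- pointwise Taylor bound on the circle
      have hptb : ∀ φ : ℝ,
          |G (r * Real.cos φ, r * Real.sin φ) - ∑ k ∈ Finset.range (n+1),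
            (k.factorial : ℝ)⁻¹ * pm (Φk k) (r * Real.cos φ, r * Real.sin φ)|
          ≤ C₁ * r ^ (n+1) := by
        intro φ
        have hzn : ‖((r * Real.cos φ, r * Real.sin φ) : ℝ × ℝ)‖ ≤ r := hnormcirc r φ hr0.le
        calc |G (r * Real.cos φ, r * Real.sin φ) - ∑ k ∈ Finset.range (n+1),
              (k.factorial : ℝ)⁻¹ * pm (Φk k) (r * Real.cos φ, r * Real.sin φ)|
            ≤ C₁ * ‖((r * Real.cos φ, r * Real.sin φ) : ℝ × ℝ)‖ ^ (n+1) :=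
              htay _ (le_trans hzn hr1)
          _ ≤ C₁ * r ^ (n+1) := by
              apply mul_le_mul_of_nonneg_left _ hC₁0
              exact pow_le_pow_left₀ (norm_nonneg _) hzn _
      -- combine
      have hsub : |(∫ φ in (0:ℝ)..(2*Real.pi), G (r * Real.cos φ, r * Real.sin φ))
          - ∑ k ∈ Finset.range (n+1), ((k.factorial : ℝ)⁻¹ * a k) * r ^ k|
          ≤ C₁ * r ^ (n+1) * (2 * Real.pi) := by
        rw [← hP r hr0.le]
        have hGi : IntervalIntegrable (fun φ => G (r * Real.cos φ, r * Real.sin φ))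
            MeasureTheory.volume 0 (2*Real.pi) := by
          apply Continuous.intervalIntegrable
          exact hGs.continuous.comp ((continuous_const.mul Real.continuous_cos).prodMk
            (continuous_const.mul Real.continuous_sin))
        have hPi : IntervalIntegrable (fun φ => ∑ k ∈ Finset.range (n+1),
            (k.factorial : ℝ)⁻¹ * pm (Φk k) (r * Real.cos φ, r * Real.sin φ))
            MeasureTheory.volume 0 (2*Real.pi) := by
          apply Continuous.intervalIntegrable
          apply continuous_finset_sum
          intro k _
          exact continuous_const.mul ((continuous_pm (Φk k)).comp
            ((continuous_const.mul Real.continuous_cos).prodMk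
              (continuous_const.mul Real.continuous_sin)))
        rw [← intervalIntegral.integral_sub hGi hPi]
        have := intervalIntegral.norm_integral_le_of_norm_le_const
          (C := C₁ * r ^ (n+1))
          (f := fun φ => G (r * Real.cos φ, r * Real.sin φ) - ∑ k ∈ Finset.range (n+1),
            (k.factorial : ℝ)⁻¹ * pm (Φk k) (r * Real.cos φ, r * Real.sin φ))
          (a := 0) (b := 2*Real.pi) ?_
        · calc |∫ φ in (0:ℝ)..(2*Real.pi), (G (r * Real.cos φ, r * Real.sin φ)
              - ∑ k ∈ Finset.range (n+1), (k.factorial : ℝ)⁻¹ *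
                pm (Φk k) (r * Real.cos φ, r * Real.sin φ))|
              ≤ C₁ * r ^ (n+1) * |2*Real.pi - 0| := this
            _ = C₁ * r ^ (n+1) * (2 * Real.pi) := by
              rw [sub_zero, abs_of_pos (by positivity)]
        · intro φ _
          exact hptb φ
      have hSb : |∫ φ in (0:ℝ)..(2*Real.pi), G (r * Real.cos φ, r * Real.sin φ)|
          ≤ Cg * r ^ (n+1) := by
        rw [hTS]
        have := hCg r ⟨hr0, hrR⟩
        rwa [hn] at this
      calc |∑ k ∈ Finset.range (n+1), ((k.factorial : ℝ)⁻¹ * a k) * r ^ k|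
          ≤ |∫ φ in (0:ℝ)..(2*Real.pi), G (r * Real.cos φ, r * Real.sin φ)|
            + |(∫ φ in (0:ℝ)..(2*Real.pi), G (r * Real.cos φ, r * Real.sin φ))
              - ∑ k ∈ Finset.range (n+1), ((k.factorial : ℝ)⁻¹ * a k) * r ^ k| := by
            have h1 := abs_sub_abs_le_abs_sub
              (∑ k ∈ Finset.range (n+1), ((k.factorial : ℝ)⁻¹ * a k) * r ^ k)
              (∫ φ in (0:ℝ)..(2*Real.pi), G (r * Real.cos φ, r * Real.sin φ))
            rw [abs_sub_comm] at h1
            linarith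
        _ ≤ Cg * r ^ (n+1) + C₁ * r ^ (n+1) * (2 * Real.pi) := add_le_add hSb hsub
        _ = (Cg + 2 * Real.pi * C₁) * r ^ (n+1) := by ring
    intro k hk
    have := poly_coeff_zero (n+1) (fun k => (k.factorial : ℝ)⁻¹ * a k)
      (Cg + 2 * Real.pi * C₁) ε₂ hε₂pos hbound k hk
    have hfac : ((k.factorial : ℝ))⁻¹ ≠ 0 := by
      simp [Nat.factorial_ne_zero]
    exact (mul_eq_zero.mp this).resolve_left hfac
  -- the solution
  set b : ℝ × ℝ → ℝ := fun z => ∑ k ∈ Finset.range (n+1),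
    (k.factorial : ℝ)⁻¹ * bk (Φk k) z with hb
  have hbs : ContDiff ℝ (⊤ : ℕ∞) b := by
    apply ContDiff.sum
    intro k _
    exact contDiff_const.mul (contDiff_bk (Φk k))
  have hfd : ∀ z : ℝ × ℝ, fderiv ℝ b z (Jmap z)
      = ∑ k ∈ Finset.range (n+1), (k.factorial : ℝ)⁻¹ * pm (Φk k) z := by
    intro z
    have hder : ∀ k ∈ Finset.range (n+1),
        HasFDerivAt (fun z => (k.factorial : ℝ)⁻¹ * bk (Φk k) z)
          ((k.factorial : ℝ)⁻¹ • fderiv ℝ (bk (Φk k)) z) z := by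
      intro k _
      exact ((((contDiff_bk (Φk k)).differentiable (by simp)) z).hasFDerivAt).const_mul _
    have hsum := HasFDerivAt.fun_sum hder
    rw [hsum.fderiv]
    rw [ContinuousLinearMap.sum_apply]
    apply Finset.sum_congr rfl
    intro k _
    rw [ContinuousLinearMap.smul_apply, fderiv_bk, mean_rot_eq_zero (Φk k) (hameanzero k
      (Finset.mem_range.mp ‹k ∈ Finset.range (n+1)›)) z]
    simp [smul_eq_mul]
  refine ⟨b, hbs, C₁, min (R/2) 1, hε₂pos, le_trans (min_le_left _ _) (by linarith), ?_⟩
  intro z hz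
  have hzR2 : ‖z‖ ≤ R/2 := le_trans hz (min_le_left _ _)
  have hz1 : ‖z‖ ≤ 1 := le_trans hz (min_le_right _ _)
  have hJ : ((z.2, -z.1) : ℝ × ℝ) = Jmap z := rfl
  rw [hJ, hfd z, ← heq z hzR2]
  calc |G z - ∑ k ∈ Finset.range (n+1), (k.factorial : ℝ)⁻¹ * pm (Φk k) z|
      ≤ C₁ * ‖z‖ ^ (n+1) := htay z hz1
    _ ≤ C₁ * ‖z‖ ^ N := by
        apply mul_le_mul_of_nonneg_left _ hC₁0
        have : N ≤ n + 1 := by omega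
        exact pow_le_pow_of_le_one (norm_nonneg z) hz1 this
end
end
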